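/- Let A be an n×n complex matrix such that every eigenvalue μ ∈ spectrum ℂ A satisfies Re μ ≠ 0, let U be a unitary n×n matrix, let η ∈ {1, −1}, and suppose A = η • (U ⬝ Aᴴ ⬝ Uᴴ). Let F be a spectral sign of A, i.e. F⬝A = A⬝F, F⬝F = 1, and for every eigenvalue μ ∈ spectrum ℂ A and every v ∈ ℂⁿ with ((A − μ•1)^n) *ᵥ v = 0 one has F *ᵥ v = v if Re μ > 0 and F *ᵥ v = −v if Re μ < 0. Then F = η • (U ⬝ Fᴴ ⬝ Uᴴ). -/

import Mathlib

/-!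
The spectral sign `F` of `A` is pinned down by its action on generalized eigenvectors, which span
`ℂⁿ`. Generalized eigenvectors of `A` for `μ` and of `Aᴴ` for `ν ≠ μ̄` are orthogonal, so `Fᴴ` acts
on the generalized eigenvectors of `Aᴴ` for `ν` by `sign (re ν)`. The symmetry makes `Uᴴ` map the
generalized eigenvectors of `A` for `μ` to those of `Aᴴ` for `ημ`, hence `η • U Fᴴ Uᴴ` acts on
them by `η · sign (re (ημ)) = sign (re μ)`, exactly as `F` does.
-/

open Matrix Polynomial

variable {ι : Type*} [Fintype ι]

namespace Matrix

lemma star_dotProduct_mulVec {R : Type*} [CommSemiring R] [StarRing R] (M : Matrix ι ι R)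
    (w v : ι → R) : star w ⬝ᵥ (M *ᵥ v) = star (Mᴴ *ᵥ w) ⬝ᵥ v := by
  rw [star_mulVec, conjTranspose_conjTranspose, dotProduct_mulVec]

variable [DecidableEq ι]

lemma _root_.SemiconjBy.pow_mulVec_mulVec_eq_zero {R : Type*} [Semiring R]
    {P X Y : Matrix ι ι R} (h : SemiconjBy P X Y) {k : ℕ} {v : ι → R} (hv : X ^ k *ᵥ v = 0) :
    Y ^ k *ᵥ (P *ᵥ v) = 0 := by
  rw [mulVec_mulVec, ← (h.pow_right k).eq, ← mulVec_mulVec, hv, mulVec_zero]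

lemma mem_spectrum_of_pow_mulVec_eq_zero {K : Type*} [Field K] {A : Matrix ι ι K}
    {μ : K} {k : ℕ} {v : ι → K} (hv : (A - μ • 1) ^ k *ᵥ v = 0) (hv0 : v ≠ 0) :
    μ ∈ spectrum K A := by
  by_contra hμ
  have hunit : IsUnit ((A - μ • 1) ^ k) := by
    rw [spectrum.notMem_iff, Algebra.algebraMap_eq_smul_one, ← neg_sub] at hμ
    simpa using hμ.neg.pow k
  exact hv0 (mulVec_injective_iff_isUnit.2 hunit (hv.trans (mulVec_zero _).symm))

lemma span_genEigenvectors_eq_top {K : Type*} [Field K] [IsAlgClosed K]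
    (A : Matrix ι ι K) :
    Submodule.span K {v | ∃ μ ∈ spectrum K A, (A - μ • 1) ^ Fintype.card ι *ᵥ v = 0} = ⊤ := by
  rw [eq_top_iff, ← Module.End.iSup_maxGenEigenspace_eq_top (toLinAlgEquiv' A), iSup_le_iff]
  intro μ v hv
  have hker : (A - μ • 1) ^ Fintype.card ι *ᵥ v = 0 := by
    have := Module.End.genEigenspace_le_genEigenspace_finrank _ μ ⊤ hv
    rw [Module.finrank_fintype_fun_eq_card, Module.End.mem_genEigenspace_nat,
      LinearMap.mem_ker] at this
    rwa [← toLinAlgEquiv'_apply, map_pow, map_sub, map_smul, map_one]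
  by_cases hv0 : v = 0
  · rw [hv0]; exact Submodule.zero_mem _
  · exact Submodule.subset_span ⟨μ, mem_spectrum_of_pow_mulVec_eq_zero hker hv0, hker⟩

/-- Bézout for the coprime `(X - μ)ᵏ` and `(X - ν̄)ˡ` puts `v` in the range of `(A - ν̄)ˡ`, whose
orthogonal complement is the kernel of `(Aᴴ - ν)ˡ`. -/
lemma star_dotProduct_eq_zero_of_pow_mulVec_eq_zero {K : Type*} [Field K] [StarRing K]
    {A : Matrix ι ι K} {μ ν : K} (hμν : ν ≠ star μ) {k l : ℕ} {v w : ι → K}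
    (hv : (A - μ • 1) ^ k *ᵥ v = 0) (hw : (Aᴴ - ν • 1) ^ l *ᵥ w = 0) : star w ⬝ᵥ v = 0 := by
  have hne : μ - star ν ≠ 0 := sub_ne_zero.2 fun h => hμν (by rw [h, star_star])
  obtain ⟨p, q, hpq⟩ := (isCoprime_X_sub_C_of_isUnit_sub hne.isUnit).pow (m := k) (n := l)
  have hB : (A - star ν • 1) ^ l = aeval A ((X - C (star ν)) ^ l) := by
    simp [Algebra.algebraMap_eq_smul_one]
  have hv' : v = (A - star ν • 1) ^ l *ᵥ (aeval A q *ᵥ v) := by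
    have := congrArg (fun p => aeval A p *ᵥ v) hpq
    simp only [map_add, map_mul, map_pow, map_sub, aeval_X, aeval_C, map_one, one_mulVec,
      add_mulVec, ← mulVec_mulVec, Algebra.algebraMap_eq_smul_one, hv, mulVec_zero,
      zero_add] at this
    calc v = aeval A q *ᵥ (A - star ν • 1) ^ l *ᵥ v := this.symm
      _ = _ := by rw [mulVec_mulVec, mulVec_mulVec, hB, ((Commute.all q _).map (aeval A)).eq]
  have hBH : ((A - star ν • 1) ^ l)ᴴ = (Aᴴ - ν • 1) ^ l := by
    simp [conjTranspose_pow, conjTranspose_sub, conjTranspose_smul]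
  rw [hv', star_dotProduct_mulVec, hBH, hw, star_zero, zero_dotProduct]

/-- Meaningful when no eigenvalue is imaginary: `Real.sign 0 = 0` would force `F` to kill the
corresponding generalized eigenvectors. -/
def IsSpectralSign (A F : Matrix ι ι ℂ) : Prop :=
  ∀ μ ∈ spectrum ℂ A, ∀ v, (A - μ • 1) ^ Fintype.card ι *ᵥ v = 0 →
    F *ᵥ v = (Real.sign μ.re : ℂ) • v

lemma IsSpectralSign.of_re_ne_zero {A F : Matrix ι ι ℂ} (hA : ∀ μ ∈ spectrum ℂ A, μ.re ≠ 0)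
    (hF : ∀ μ ∈ spectrum ℂ A, ∀ v, (A - μ • 1) ^ Fintype.card ι *ᵥ v = 0 →
      (0 < μ.re → F *ᵥ v = v) ∧ (μ.re < 0 → F *ᵥ v = -v)) :
    IsSpectralSign A F := by
  intro μ hμ v hv
  rcases (hA μ hμ).lt_or_gt with hneg | hpos
  · simp [Real.sign_of_neg hneg, (hF μ hμ v hv).2 hneg]
  · simp [Real.sign_of_pos hpos, (hF μ hμ v hv).1 hpos]

lemma IsSpectralSign.unique {A F G : Matrix ι ι ℂ} (hF : IsSpectralSign A F)
    (hG : IsSpectralSign A G) : F = G := by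
  refine toLin'.injective (LinearMap.ext_on (span_genEigenvectors_eq_top A) ?_)
  rintro v ⟨μ, hμ, hv⟩
  simp only [toLin'_apply, hF μ hμ v hv, hG μ hμ v hv]

open scoped ComplexOrder in
lemma IsSpectralSign.conjTranspose_mulVec {A F : Matrix ι ι ℂ} (hF : IsSpectralSign A F)
    {ν : ℂ} {w : ι → ℂ} (hw : (Aᴴ - ν • 1) ^ Fintype.card ι *ᵥ w = 0) :
    Fᴴ *ᵥ w = (Real.sign ν.re : ℂ) • w := by
  set u := Fᴴ *ᵥ w - (Real.sign ν.re : ℂ) • w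
  have hu : dotProductBilin ℂ ℂ (star u) = 0 := by
    refine LinearMap.ext_on (span_genEigenvectors_eq_top A) ?_
    rintro v ⟨μ, hμ, hv⟩
    have hexpand : star u ⬝ᵥ v = (Real.sign μ.re - Real.sign ν.re : ℂ) * (star w ⬝ᵥ v) := by
      rw [star_sub, sub_dotProduct, ← star_dotProduct_mulVec, hF μ hμ v hv, star_smul,
        Complex.star_def, Complex.conj_ofReal, dotProduct_smul, smul_dotProduct, smul_eq_mul,
        smul_eq_mul, sub_mul]
    by_cases hνμ : ν = star μ
    · simp [hexpand, hνμ]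
    · simp [hexpand, star_dotProduct_eq_zero_of_pow_mulVec_eq_zero hνμ hv hw]
  exact sub_eq_zero.1 (dotProduct_star_self_eq_zero.1 (LinearMap.congr_fun hu u))

end Matrix

theorem stmt_13_general {n : ℕ} (A U F : Matrix (Fin n) (Fin n) ℂ) (η : ℂ)
    (hA : ∀ μ ∈ spectrum ℂ A, μ.re ≠ 0)
    (hU : U ∈ Matrix.unitaryGroup (Fin n) ℂ)
    (hη : η = 1 ∨ η = -1)
    (hsym : A = η • (U * Aᴴ * Uᴴ))
    (hF : ∀ μ ∈ spectrum ℂ A, ∀ v : Fin n → ℂ, ((A - μ • 1) ^ n) *ᵥ v = 0 →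
      (0 < μ.re → F *ᵥ v = v) ∧ (μ.re < 0 → F *ᵥ v = -v)) :
    F = η • (U * Fᴴ * Uᴴ) := by
  have hF' : IsSpectralSign A F := .of_re_ne_zero hA (by simpa only [Fintype.card_fin] using hF)
  refine hF'.unique fun μ hμ v hv => ?_
  have hUU : Uᴴ * U = 1 := Unitary.star_mul_self_of_mem hU
  have hUU' : U * Uᴴ = 1 := Unitary.mul_star_self_of_mem hU
  have hηη : η * η = 1 := by rcases hη with rfl | rfl <;> norm_num
  have hsemi : SemiconjBy Uᴴ (η • (A - μ • 1)) (Aᴴ - (η * μ) • 1) := by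
    rw [SemiconjBy]
    conv_lhs => rw [hsym]
    simp only [smul_sub, smul_smul, hηη, one_smul, mul_sub, mul_smul_comm, mul_one, sub_mul,
      smul_mul_assoc, one_mul, ← mul_assoc, hUU]
  have hw := hsemi.pow_mulVec_mulVec_eq_zero (k := Fintype.card (Fin n))
    (by rw [_root_.smul_pow, smul_mulVec, hv, smul_zero])
  rw [smul_mulVec, ← mulVec_mulVec, ← mulVec_mulVec, hF'.conjTranspose_mulVec hw,
    mulVec_smul, mulVec_mulVec, hUU', one_mulVec, smul_smul]
  rcases hη with rfl | rfl <;> simp [Real.sign_neg]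

theorem stmt_13 {n : ℕ} (A U F : Matrix (Fin n) (Fin n) ℂ) (η : ℂ)
    (hA : ∀ μ ∈ spectrum ℂ A, μ.re ≠ 0)
    (hU : U ∈ Matrix.unitaryGroup (Fin n) ℂ)
    (hη : η = 1 ∨ η = -1)
    (hsym : A = η • (U * Aᴴ * Uᴴ))
    (hFA : F * A = A * F) (hFF : F * F = 1)
    (hF : ∀ μ ∈ spectrum ℂ A, ∀ v : Fin n → ℂ, ((A - μ • 1) ^ n) *ᵥ v = 0 →
      (0 < μ.re → F *ᵥ v = v) ∧ (μ.re < 0 → F *ᵥ v = -v)) :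
    F = η • (U * Fᴴ * Uᴴ) :=
  stmt_13_general A U F η hA hU hη hsym hF
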